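/- If the Seidel spectrum of a graph G on n vertices is {σ_1,...,σ_n}, then the Seidel spectrum of D_m(G) is {mσ_i + (m-1) : i = 1,...,n} together with the eigenvalue -1 with multiplicity mn - n. -/

import Mathlib

open Matrix Kronecker BigOperators Finset

/-- The all-ones matrix. -/
noncomputable def allOnes (k : Type*) [Fintype k] : Matrix k k ℝ :=
  Matrix.of fun _ _ => 1

/-- The Seidel matrix formed from an adjacency matrix `M`: `S(M) = J - I - 2M`. -/
noncomputable def seidelOf {k : Type*} [Fintype k] [DecidableEq k]
    (M : Matrix k k ℝ) : Matrix k k ℝ :=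
  allOnes k - 1 - 2 • M

/-- The (complex) multiset of eigenvalues of a real matrix: roots of its
characteristic polynomial over `ℂ`. -/
noncomputable def specC {k : Type*} [Fintype k] [DecidableEq k]
    (M : Matrix k k ℝ) : Multiset ℂ :=
  ((M.map (Complex.ofReal)).charpoly).roots

/-- The energy of a real matrix: the sum of absolute values of its eigenvalues. -/
noncomputable def energy {k : Type*} [Fintype k] [DecidableEq k]
    (M : Matrix k k ℝ) : ℝ :=
  ((specC M).map (fun z : ℂ => ‖z‖)).sum

/-!
Writing `C = S(G) + I`, the Seidel matrix of `D_m(G)` is `J_m ⊗ C - I`. The matrix `J_m ⊗ C`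
factors as `U V` with `U = 𝟙_m ⊗ I_n` and `V = 𝟙_mᵀ ⊗ C`, while `V U = m C`; by Sylvester's
identity `χ(U V) = X^(mn - n) χ(V U)`. So the spectrum of `J_m ⊗ C` is `m (σ_i + 1)` together
with `mn - n` zeros, and subtracting `I` shifts everything by `-1`.
-/

namespace Matrix

open Polynomial

variable {ι n : Type*} [Fintype ι] [Fintype n] [DecidableEq ι] [DecidableEq n]

theorem roots_charpoly_sub_scalar {R : Type*} [CommRing R] [IsDomain R] (M : Matrix n n R)
    (μ : R) : (M - scalar n μ).charpoly.roots = M.charpoly.roots.map (· - μ) := by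
  rw [charpoly_sub_scalar]
  simpa using roots_comp_C_mul_X_add_C M.charpoly 1 μ isUnit_one

theorem charpoly_smul_eq_scaleRoots {K : Type*} [Field K] [Infinite K] (M : Matrix n n K)
    (r : K) : (r • M).charpoly = M.charpoly.scaleRoots r := by
  rcases eq_or_ne r 0 with rfl | hr
  · simp [scaleRoots_zero, (charpoly_monic M).leadingCoeff]
  refine Polynomial.funext fun t => ?_
  obtain ⟨s, rfl⟩ : ∃ s, t = r * s := ⟨r⁻¹ * t, by field_simp⟩
  rw [scaleRoots_eval_mul, charpoly_natDegree_eq_dim, eval_charpoly, eval_charpoly,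
    ← det_smul, smul_sub, scalar_apply, scalar_apply, ← smul_one_eq_diagonal,
    ← smul_one_eq_diagonal, smul_smul]

theorem roots_charpoly_smul {K : Type*} [Field K] [Infinite K] (M : Matrix n n K) {r : K}
    (hr : r ≠ 0) : (r • M).charpoly.roots = M.charpoly.roots.map (r * ·) := by
  rw [charpoly_smul_eq_scaleRoots, roots_scaleRoots _ hr.isUnit]

theorem charpoly_ones_kronecker {R : Type*} [CommRing R] [Nonempty ι] (C : Matrix n n R) :
    ((of fun _ _ => 1 : Matrix ι ι R) ⊗ₖ C).charpoly =
      X ^ (Fintype.card ι * Fintype.card n - Fintype.card n) *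
        ((Fintype.card ι : R) • C).charpoly := by
  set U : Matrix (ι × n) n R := (1 : Matrix n n R).submatrix Prod.snd id
  set V : Matrix n (ι × n) R := C.submatrix id Prod.snd
  have hUV : U * V = (of fun _ _ => 1 : Matrix ι ι R) ⊗ₖ C := by
    ext ⟨i, j⟩ ⟨i', j'⟩
    simp [U, V, mul_apply, one_apply]
  have hVU : V * U = (Fintype.card ι : R) • C := by
    ext k l
    simp [U, V, mul_apply, one_apply, Fintype.sum_prod_type]
  have hcard : Fintype.card n ≤ Fintype.card (ι × n) := by
    rw [Fintype.card_prod]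
    exact Nat.le_mul_of_pos_left _ Fintype.card_pos
  rw [← hUV, charpoly_mul_comm_of_le U V hcard, hVU, Fintype.card_prod]

end Matrix

theorem seidelOf_allOnes_kronecker {ι k : Type*} [Fintype ι] [Fintype k] [DecidableEq ι]
    [DecidableEq k] (M : Matrix k k ℝ) :
    seidelOf (allOnes ι ⊗ₖ M) = allOnes ι ⊗ₖ (seidelOf M + 1) - 1 := by
  ext ⟨i, j⟩ ⟨i', j'⟩
  simp only [seidelOf, allOnes, Matrix.sub_apply, Matrix.add_apply, Matrix.smul_apply,
    one_apply, kroneckerMap_apply, of_apply]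
  ring

theorem seidel_spectrum_Dm {m n : ℕ} (hm : 1 ≤ m) (G : SimpleGraph (Fin n))
    [DecidableRel G.Adj] :
    specC (seidelOf (allOnes (Fin m) ⊗ₖ G.adjMatrix ℝ)) =
      (specC (seidelOf (G.adjMatrix ℝ))).map (fun σ => (m : ℂ) * σ + ((m : ℂ) - 1)) +
        Multiset.replicate (m * n - n) (-1 : ℂ) := by
  set S := (seidelOf (G.adjMatrix ℝ)).map Complex.ofReal
  have : Nonempty (Fin m) := ⟨⟨0, hm⟩⟩
  have hm0 : (m : ℂ) ≠ 0 := Nat.cast_ne_zero.2 (by omega)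
  have hlift : (seidelOf (allOnes (Fin m) ⊗ₖ G.adjMatrix ℝ)).map Complex.ofReal =
      (of fun _ _ => 1) ⊗ₖ (S - scalar _ (-1)) - scalar _ 1 := by
    rw [seidelOf_allOnes_kronecker]
    ext ⟨i, j⟩ ⟨i', j'⟩
    simp only [S, allOnes, map_apply, Matrix.sub_apply, Matrix.add_apply, kroneckerMap_apply,
      of_apply, one_apply, one_mul, Prod.mk.injEq, Complex.ofReal_sub, Complex.ofReal_add,
      scalar_apply, diagonal_apply]
    split_ifs <;> push_cast <;> ring
  unfold specC
  rw [hlift, roots_charpoly_sub_scalar, charpoly_ones_kronecker,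
    Polynomial.roots_mul (mul_ne_zero (pow_ne_zero _ Polynomial.X_ne_zero)
      (charpoly_monic _).ne_zero),
    Polynomial.roots_X_pow, Fintype.card_fin, Fintype.card_fin, roots_charpoly_smul _ hm0,
    roots_charpoly_sub_scalar, Multiset.map_add, Multiset.map_map, Multiset.map_map, add_comm, Multiset.map_nsmul,
    Multiset.map_singleton, Multiset.nsmul_singleton]
  congr 1
  · refine Multiset.map_congr rfl fun σ _ => ?_
    simp only [Function.comp_apply]
    ring
  · norm_num
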